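/- Let q ≥ 4 be an even integer and n ≥ 1. Let ι : {0,1}ⁿ → (ZMod q)ⁿ be the coordinatewise embedding sending 0 to 0 and 1 to 1, let Eⁿ = {0, 2, 4, …, q−2}ⁿ ⊆ (ZMod q)ⁿ be the n-tuples of even residues, let C₂ ⊆ {0,1}ⁿ be any set, and let C = { e + ι(c) : e ∈ Eⁿ, c ∈ C₂ }. Then for every natural number z, |{ x ∈ C : w(x) = z }| = 2^z · |{ c ∈ C₂ : the Hamming weight of c equals z }|, where w(x) = Σ_k wt(x_k) ∈ ℕ ∪ {∞} with wt(a) = 0 if a = 0, wt(a) = 1 if a = ±1, and wt(a) = ∞ otherwise. -/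

import Mathlib

open scoped ENat

/-- Single-letter weight on `ZMod q`: `0` at `0`, `1` at `±1`, `∞` otherwise. -/
noncomputable def wt1 (q : ℕ) (a : ZMod q) : ℕ∞ :=
  if a = 0 then 0 else if a = 1 ∨ a = -1 then 1 else ⊤

/-- Weight `w(x) = Σₖ wt(xₖ) ∈ ℕ ∪ {∞}` on `(ZMod q)ⁿ`. -/
noncomputable def wgt (q n : ℕ) (x : Fin n → ZMod q) : ℕ∞ :=
  ∑ k, wt1 q (x k)

/-- Coordinatewise embedding `{0,1}ⁿ → (ZMod q)ⁿ` sending `0 ↦ 0`, `1 ↦ 1`. -/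
def iota (q n : ℕ) (c : Fin n → ZMod 2) : Fin n → ZMod q :=
  fun k => ((c k).val : ZMod q)

open Finset

/-!
Reduction modulo 2 is a ring map `φ : ZMod q → ZMod 2` (as `q` is even) whose kernel is the even
residues and which is split by `ι`, so `C` is exactly the preimage of `C₂` under `φ`. A word has
finite weight iff its letters lie in `{0, 1, -1}`, and then its weight is its Hamming weight, which
`φ` preserves. Over a binary word `c`, the ternary words are obtained by choosing `±1` at each
nonzero letter of `c`; these choices are distinct since `1 ≠ -1` for `q ≥ 4`, giving `2 ^ z` words.
-/

section Ternary

variable {ι R : Type*} [Ring R] (φ : R →+* ZMod 2)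

lemma map_eq_zero_iff_of_ternary {a : R} (ha : a = 0 ∨ a = 1 ∨ a = -1) : φ a = 0 ↔ a = 0 := by
  have := φ.domain_nontrivial
  rcases ha with rfl | rfl | rfl <;> simp

variable [Fintype ι] [DecidableEq ι] [DecidableEq R]

variable (ι R) in
def ternaryVectors : Finset (ι → R) :=
  Fintype.piFinset fun _ => {0, 1, -1}

lemma mem_ternaryVectors {x : ι → R} :
    x ∈ ternaryVectors ι R ↔ ∀ k, x k = 0 ∨ x k = 1 ∨ x k = -1 := by
  simp [ternaryVectors]

lemma hammingNorm_comp_of_mem_ternaryVectors {x : ι → R} (hx : x ∈ ternaryVectors ι R) :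
    hammingNorm (φ ∘ x) = hammingNorm x := by
  rw [mem_ternaryVectors] at hx
  unfold hammingNorm
  congr 1
  exact filter_congr fun k _ => (map_eq_zero_iff_of_ternary φ (hx k)).not

lemma filter_ternaryVectors_comp_eq (c : ι → ZMod 2) :
    (ternaryVectors ι R).filter (fun x => φ ∘ x = c) =
      Fintype.piFinset fun k => if c k = 0 then {0} else {1, -1} := by
  ext x
  simp only [ternaryVectors, mem_filter, Fintype.mem_piFinset, funext_iff, Function.comp_apply,
    ← forall_and]
  refine forall_congr' fun k => ?_
  have := φ.domain_nontrivial
  generalize x k = a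
  generalize c k = b
  constructor
  · rintro ⟨ha, rfl⟩
    simp only [mem_insert, mem_singleton] at ha
    rcases ha with rfl | rfl | rfl <;> simp
  · obtain rfl | rfl : b = 0 ∨ b = 1 := by revert b; decide
    · simp +contextual
    · simp only [one_ne_zero, if_false, mem_insert, mem_singleton]
      rintro (rfl | rfl) <;> simp

lemma card_filter_ternaryVectors_comp_eq (hR : (1 : R) ≠ -1) (c : ι → ZMod 2) :
    #((ternaryVectors ι R).filter (fun x => φ ∘ x = c)) = 2 ^ hammingNorm c := by
  rw [filter_ternaryVectors_comp_eq, Fintype.card_piFinset]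
  simp only [apply_ite card, card_singleton, card_pair hR]
  rw [prod_ite, prod_const_one, one_mul, prod_const]
  rfl

lemma card_filter_ternaryVectors_comp_mem (hR : (1 : R) ≠ -1) (C : Finset (ι → ZMod 2)) (z : ℕ) :
    #((ternaryVectors ι R).filter fun x => φ ∘ x ∈ C ∧ hammingNorm x = z) =
      2 ^ z * #(C.filter fun c => hammingNorm c = z) := by
  have hmaps : ∀ x ∈ (ternaryVectors ι R).filter (fun x => φ ∘ x ∈ C ∧ hammingNorm x = z),
      φ ∘ x ∈ C.filter fun c => hammingNorm c = z := by
    intro x hx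
    rw [mem_filter] at hx ⊢
    exact ⟨hx.2.1, by rw [hammingNorm_comp_of_mem_ternaryVectors φ hx.1, hx.2.2]⟩
  rw [card_eq_sum_card_fiberwise hmaps, sum_const_nat (m := 2 ^ z), mul_comm]
  intro c hc
  rw [mem_filter] at hc
  rw [filter_filter, ← hc.2, ← card_filter_ternaryVectors_comp_eq φ hR c]
  congr 1
  refine filter_congr fun x hx => ⟨fun h => h.2, ?_⟩
  rintro rfl
  exact ⟨⟨hc.1, (hammingNorm_comp_of_mem_ternaryVectors φ hx).symm⟩, rfl⟩

end Ternary

lemma Finset.image_ker_add_section_eq_filter {G H : Type*} [AddGroup G] [AddGroup H] [Fintype G]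
    [DecidableEq G] [DecidableEq H] (π : G →+ H) (s : H → G) (hs : ∀ c, π (s c) = c)
    (C : Finset H) :
    ((univ.filter fun e => π e = 0) ×ˢ C).image (fun p => p.1 + s p.2) =
      univ.filter fun x => π x ∈ C := by
  ext x
  simp only [mem_image, mem_product, mem_filter, mem_univ, true_and, Prod.exists]
  constructor
  · rintro ⟨e, c, ⟨he, hc⟩, rfl⟩
    rwa [map_add, he, hs, zero_add]
  · intro hx
    exact ⟨x - s (π x), π x, ⟨by rw [map_sub, hs, sub_self], hx⟩, sub_add_cancel _ _⟩

namespace ZMod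

variable {q : ℕ} (φ : ZMod q →+* ZMod 2)

lemma map_iota {n : ℕ} (c : Fin n → ZMod 2) : φ ∘ iota q n c = c := by
  funext k
  simp [iota]

lemma exists_eq_two_mul_iff_map_eq_zero [NeZero q] (a : ZMod q) :
    (∃ b, a = 2 * b) ↔ φ a = 0 := by
  constructor
  · rintro ⟨b, rfl⟩
    rw [map_mul, map_ofNat]
    exact zero_mul _
  · intro ha
    rw [← natCast_zmod_val a, map_natCast, natCast_eq_zero_iff] at ha
    obtain ⟨m, hm⟩ := ha
    exact ⟨m, by rw [← natCast_zmod_val a, hm]; push_cast; rfl⟩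

end ZMod

section Weight

variable {q n : ℕ}

lemma wt1_of_ternary {a : ZMod q} (ha : a = 0 ∨ a = 1 ∨ a = -1) :
    wt1 q a = if a ≠ 0 then 1 else 0 := by
  unfold wt1
  by_cases h : a = 0 <;> simp_all

lemma wgt_of_mem_ternaryVectors {x : Fin n → ZMod q} (hx : x ∈ ternaryVectors (Fin n) (ZMod q)) :
    wgt q n x = hammingNorm x := by
  rw [mem_ternaryVectors] at hx
  simp only [wgt, wt1_of_ternary (hx _)]
  rw [sum_boole]
  rfl

lemma wgt_eq_top_of_notMem {x : Fin n → ZMod q} (hx : x ∉ ternaryVectors (Fin n) (ZMod q)) :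
    wgt q n x = ⊤ := by
  rw [mem_ternaryVectors] at hx
  simp only [not_forall, not_or] at hx
  obtain ⟨k, h0, h1, h2⟩ := hx
  exact ENat.sum_eq_top.2 ⟨k, mem_univ _, by simp [wt1, h0, h1, h2]⟩

lemma wgt_eq_natCast_iff (x : Fin n → ZMod q) (z : ℕ) :
    wgt q n x = z ↔ x ∈ ternaryVectors (Fin n) (ZMod q) ∧ hammingNorm x = z := by
  by_cases hx : x ∈ ternaryVectors (Fin n) (ZMod q)
  · simp [wgt_of_mem_ternaryVectors hx, hx]
  · simp [wgt_eq_top_of_notMem hx, hx]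

end Weight

theorem stmt15 (q n : ℕ) [NeZero q] (hq : 4 ≤ q) (hqe : Even q)
    (C₂ : Finset (Fin n → ZMod 2)) (z : ℕ) :
    ((((Finset.univ.filter fun e : Fin n → ZMod q => ∀ k, ∃ b : ZMod q, e k = 2 * b) ×ˢ C₂).image
        (fun p => p.1 + iota q n p.2)).filter
      (fun x => wgt q n x = (z : ℕ∞))).card
    = 2 ^ z * (C₂.filter fun c => (Finset.univ.filter fun k => c k ≠ 0).card = z).card := by
  have : Fact (2 < q) := ⟨by omega⟩
  set φ := ZMod.castHom hqe.two_dvd (ZMod 2)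
  have hker : (univ.filter fun e : Fin n → ZMod q => ∀ k, ∃ b, e k = 2 * b) =
      univ.filter fun e => (φ.compLeft (Fin n)).toAddMonoidHom e = 0 :=
    filter_congr fun e _ => by
      simp [funext_iff, ZMod.exists_eq_two_mul_iff_map_eq_zero φ]
  rw [hker, image_ker_add_section_eq_filter _ (iota q n) (ZMod.map_iota φ)]
  convert card_filter_ternaryVectors_comp_mem φ ZMod.neg_one_ne_one.symm C₂ z using 2
  · ext x
    simp only [wgt_eq_natCast_iff, mem_filter, mem_univ, true_and]
    tauto
  · rfl
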